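/- arXiv:1711.08684 — 2 statements merged into one kernel-verified Lean document; each statement's English description precedes it below -/
import Mathlib

section
/- Let 0 ≤ p < 1 and K ≥ 1, and for 0 < r < 1 set E' = closure(D) \ B_0(r), where B_0(r) = { z : |z - p(1-r^{2/K})/(1-p^2 r^{2/K})| < r^{1/K}(1-p^2)/(1-p^2 r^{2/K}) }. Let g_0(z) = z/(1-pz). Then |g_0(E')| = π(1-p^2)^{-2}(1 - r^{2/K}), and π(1-p^2)^{-2}(1-r^2) = K|g_0(E')| + O(|g_0(E')|^2) as |g_0(E')| → 0 (i.e., as r → 1^-). -/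
open Complex Metric MeasureTheory Asymptotics Filter
open scoped ENNReal NNReal

private lemma key_frac (p : ℝ) (hp2 : (0:ℝ) < 1 - p ^ 2) (z : ℂ) (hz : (1:ℂ) - p * z ≠ 0) :
    z / (1 - p * z) - ((p / (1 - p ^ 2) : ℝ) : ℂ) = (z - p) / ((1 - p * z) * ((1 - p ^ 2 : ℝ) : ℂ)) := by
  have h2 : (1:ℂ) - (p:ℂ) ^ 2 ≠ 0 := by
    have := (Complex.ofReal_ne_zero).mpr hp2.ne'
    push_cast at this; simpa using this
  have hz' : (1:ℂ) - z * p ≠ 0 := by rwa [mul_comm]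
  push_cast
  field_simp
  ring

private lemma abs_le_iff_normSq (u : ℂ) (t : ℝ) (ht : 0 ≤ t) :
    ‖u‖ ≤ t ↔ Complex.normSq u ≤ t ^ 2 := by
  rw [← Complex.sq_norm, pow_le_pow_iff_left₀ (norm_nonneg _) ht two_ne_zero]

private lemma abs_lt_iff_normSq (u : ℂ) (t : ℝ) (ht : 0 ≤ t) :
    ‖u‖ < t ↔ Complex.normSq u < t ^ 2 := by
  rw [← Complex.sq_norm, pow_lt_pow_iff_left₀ (norm_nonneg _) ht two_ne_zero]

private lemma equiv_outer (p : ℝ) (hp0 : 0 ≤ p) (hp1 : p < 1) (z : ℂ)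
    (hz : (1:ℂ) - p * z ≠ 0) :
    ‖z / (1 - p * z) - ((p / (1 - p ^ 2) : ℝ) : ℂ)‖ ≤ 1 / (1 - p ^ 2) ↔
      ‖z‖ ≤ 1 := by
  have hp2 : (0:ℝ) < 1 - p ^ 2 := by nlinarith
  rw [key_frac p hp2 z hz, norm_div, norm_mul, Complex.norm_real, Real.norm_eq_abs, abs_of_pos hp2]
  have hB : 0 < ‖1 - (p:ℂ) * z‖ := norm_pos_iff.mpr hz
  rw [div_le_div_iff₀ (by positivity) hp2]
  have h1 : ‖z - ↑p‖ * (1 - p ^ 2) ≤ 1 * (‖1 - ↑p * z‖ * (1 - p ^ 2)) ↔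
      ‖z - ↑p‖ ≤ ‖1 - ↑p * z‖ := by
    rw [one_mul]
    exact mul_le_mul_iff_of_pos_right hp2
  rw [h1, abs_le_iff_normSq _ _ (norm_nonneg _), Complex.sq_norm,
    abs_le_iff_normSq _ _ zero_le_one, one_pow]
  simp only [Complex.normSq_apply, Complex.sub_re, Complex.sub_im, Complex.mul_re, Complex.mul_im,
    Complex.ofReal_re, Complex.ofReal_im, Complex.one_re, Complex.one_im]
  constructor <;> intro h <;> nlinarith [sq_nonneg z.re, sq_nonneg z.im]

private lemma equiv_inner (p s : ℝ) (hp0 : 0 ≤ p) (hp1 : p < 1) (hs0 : 0 < s) (hs1 : s < 1)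
    (z : ℂ) (hz : (1:ℂ) - p * z ≠ 0) :
    ‖z / (1 - p * z) - ((p / (1 - p ^ 2) : ℝ) : ℂ)‖ < s / (1 - p ^ 2) ↔
      ‖z - ((p * (1 - s ^ 2) / (1 - p ^ 2 * s ^ 2) : ℝ) : ℂ)‖ <
        s * (1 - p ^ 2) / (1 - p ^ 2 * s ^ 2) := by
  have hp2 : (0:ℝ) < 1 - p ^ 2 := by nlinarith
  have hd : (0:ℝ) < 1 - p ^ 2 * s ^ 2 := by nlinarith
  rw [key_frac p hp2 z hz, norm_div, norm_mul, Complex.norm_real, Real.norm_eq_abs, abs_of_pos hp2]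
  have hB : 0 < ‖1 - (p:ℂ) * z‖ := norm_pos_iff.mpr hz
  rw [div_lt_div_iff₀ (by positivity) hp2]
  have h1 : ‖z - ↑p‖ * (1 - p ^ 2) < s * (‖1 - ↑p * z‖ * (1 - p ^ 2)) ↔
      ‖z - ↑p‖ < s * ‖1 - ↑p * z‖ := by
    rw [show s * (‖1 - ↑p * z‖ * (1 - p ^ 2)) =
      (s * ‖1 - ↑p * z‖) * (1 - p ^ 2) by ring]
    exact mul_lt_mul_iff_of_pos_right hp2
  rw [h1, abs_lt_iff_normSq _ _ (by positivity),
    abs_lt_iff_normSq _ _ (by positivity), mul_pow, Complex.sq_norm]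
  have hident : s ^ 2 * Complex.normSq (1 - ↑p * z) - Complex.normSq (z - ↑p) =
      (1 - p ^ 2 * s ^ 2) * ((s * (1 - p ^ 2) / (1 - p ^ 2 * s ^ 2)) ^ 2 -
        Complex.normSq (z - ((p * (1 - s ^ 2) / (1 - p ^ 2 * s ^ 2) : ℝ) : ℂ))) := by
    simp only [Complex.normSq_apply, Complex.sub_re, Complex.sub_im, Complex.mul_re,
      Complex.mul_im, Complex.ofReal_re, Complex.ofReal_im, Complex.one_re, Complex.one_im]
    have hd' : (1:ℝ) - s ^ 2 * p ^ 2 ≠ 0 := by nlinarith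
    field_simp
    ring
  constructor <;> intro h <;> nlinarith [hident]

private lemma image_eq (p s : ℝ) (hp0 : 0 ≤ p) (hp1 : p < 1) (hs0 : 0 < s) (hs1 : s < 1) :
    (fun z : ℂ => z / (1 - p * z)) ''
      (closedBall (0 : ℂ) 1 \
        ball ((p * (1 - s ^ 2) / (1 - p ^ 2 * s ^ 2) : ℝ) : ℂ)
          (s * (1 - p ^ 2) / (1 - p ^ 2 * s ^ 2))) =
    closedBall ((p / (1 - p ^ 2) : ℝ) : ℂ) (1 / (1 - p ^ 2)) \
      ball ((p / (1 - p ^ 2) : ℝ) : ℂ) (s / (1 - p ^ 2)) := by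
  have hp2 : (0:ℝ) < 1 - p ^ 2 := by nlinarith
  ext w
  simp only [Set.mem_image, Set.mem_diff, mem_closedBall, mem_ball, Complex.dist_eq, sub_zero]
  constructor
  · rintro ⟨z, ⟨hz1, hz2⟩, rfl⟩
    have hz : (1:ℂ) - p * z ≠ 0 := by
      intro h
      have h1 : ‖(1:ℂ) - (1 - p * z)‖ ≤ p := by
        simp only [sub_sub_cancel, norm_mul, Complex.norm_real, Real.norm_eq_abs, _root_.abs_of_nonneg hp0]
        nlinarith [mul_le_mul_of_nonneg_left hz1 hp0]
      rw [h, sub_zero] at h1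
      simp at h1; linarith
    exact ⟨(equiv_outer p hp0 hp1 z hz).2 hz1,
      fun hlt => hz2 ((equiv_inner p s hp0 hp1 hs0 hs1 z hz).1 hlt)⟩
  · rintro ⟨hw1, hw2⟩
    have hpw : (1:ℂ) + p * w ≠ 0 := by
      intro h
      have hp0' : (p:ℝ) ≠ 0 := by
        intro h0; rw [h0] at h; simp at h
      have hpc : (p:ℂ) ≠ 0 := Complex.ofReal_ne_zero.mpr hp0'
      have hw : w = ((-1/p : ℝ) : ℂ) := by
        push_cast
        field_simp
        linear_combination h
      have hp0'' : 0 < p := lt_of_le_of_ne hp0 (Ne.symm hp0')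
      rw [hw, ← Complex.ofReal_sub, Complex.norm_real, Real.norm_eq_abs] at hw1
      have hcomb : -1/p - p/(1-p^2) = -(1/(p*(1-p^2))) := by
        field_simp
        ring
      rw [hcomb, abs_neg, _root_.abs_of_pos (by positivity)] at hw1
      have h3 := (div_le_div_iff₀ (by positivity) hp2).mp hw1
      nlinarith [h3]
    set z := w / (1 + p * w) with hzdef
    have hzw : (1:ℂ) - p * z = 1 / (1 + p * w) := by
      rw [hzdef]; field_simp; ring
    have hz : (1:ℂ) - p * z ≠ 0 := by
      rw [hzw]; exact one_div_ne_zero hpw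
    have hgz : z / (1 - p * z) = w := by
      rw [hzw, hzdef, div_div_eq_mul_div, div_one, div_mul_cancel₀ _ hpw]
    refine ⟨z, ⟨?_, fun hlt => hw2 ?_⟩, hgz⟩
    · exact (equiv_outer p hp0 hp1 z hz).1 (by rw [hgz]; exact hw1)
    · rw [← hgz]; exact (equiv_inner p s hp0 hp1 hs0 hs1 z hz).2 hlt


private lemma vol_eq (p s : ℝ) (hp0 : 0 ≤ p) (hp1 : p < 1) (hs0 : 0 < s) (hs1 : s < 1) :
    (volume (closedBall ((p / (1 - p ^ 2) : ℝ) : ℂ) (1 / (1 - p ^ 2)) \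
      ball ((p / (1 - p ^ 2) : ℝ) : ℂ) (s / (1 - p ^ 2)))).toReal =
    Real.pi / (1 - p ^ 2) ^ 2 * (1 - s ^ 2) := by
  have hp2 : (0:ℝ) < 1 - p ^ 2 := by nlinarith
  have hsub : ball ((p / (1 - p ^ 2) : ℝ) : ℂ) (s / (1 - p ^ 2)) ⊆
      closedBall ((p / (1 - p ^ 2) : ℝ) : ℂ) (1 / (1 - p ^ 2)) :=
    ball_subset_closedBall.trans (closedBall_subset_closedBall (by gcongr))
  have hfin : volume (ball ((p / (1 - p ^ 2) : ℝ) : ℂ) (s / (1 - p ^ 2))) ≠ ⊤ := by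
    rw [Complex.volume_ball]
    exact ENNReal.mul_ne_top (ENNReal.pow_ne_top ENNReal.ofReal_ne_top) ENNReal.coe_ne_top
  rw [measure_diff hsub measurableSet_ball.nullMeasurableSet hfin,
    Complex.volume_closedBall, Complex.volume_ball]
  have hpi : (NNReal.pi : ℝ≥0∞) = ENNReal.ofReal Real.pi := by
    rw [← NNReal.coe_real_pi, ENNReal.ofReal_coe_nnreal]
  have hnn : (0:ℝ) ≤ (1 / (1 - p ^ 2)) ^ 2 * Real.pi - (s / (1 - p ^ 2)) ^ 2 * Real.pi := by
    have h1 : (s / (1 - p ^ 2)) ^ 2 ≤ (1 / (1 - p ^ 2)) ^ 2 := by gcongr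
    nlinarith [Real.pi_pos]
  rw [hpi, ← ENNReal.ofReal_pow (by positivity), ← ENNReal.ofReal_pow (by positivity),
    ← ENNReal.ofReal_mul (by positivity), ← ENNReal.ofReal_mul (by positivity),
    ← ENNReal.ofReal_sub _ (by positivity), ENNReal.toReal_ofReal hnn]
  field_simp

/-- With `E' = closure 𝔻 \ B₀(r)` and `g₀(z) = z/(1-pz)`, one has
`|g₀(E')| = π(1-p²)^{-2}(1 - r^{2/K})`, and
`π(1-p²)^{-2}(1-r²) = K|g₀(E')| + O(|g₀(E')|²)` as `r → 1⁻`. -/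
theorem sharpness_constant_K (p K : ℝ) (hp0 : 0 ≤ p) (hp1 : p < 1) (hK : 1 ≤ K) :
    (∀ r : ℝ, 0 < r → r < 1 →
      (volume ((fun z : ℂ => z / (1 - p * z)) ''
        (closedBall (0 : ℂ) 1 \
          ball ((p * (1 - r ^ ((2 : ℝ) / K)) / (1 - p ^ 2 * r ^ ((2 : ℝ) / K)) : ℝ) : ℂ)
            (r ^ (1 / K) * (1 - p ^ 2) / (1 - p ^ 2 * r ^ ((2 : ℝ) / K)))))).toReal =
        Real.pi / (1 - p ^ 2) ^ 2 * (1 - r ^ ((2 : ℝ) / K))) ∧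
    (fun r : ℝ => Real.pi / (1 - p ^ 2) ^ 2 * (1 - r ^ 2) -
        K * (Real.pi / (1 - p ^ 2) ^ 2 * (1 - r ^ ((2 : ℝ) / K))))
      =O[nhdsWithin 1 (Set.Iio 1)]
      (fun r : ℝ => (Real.pi / (1 - p ^ 2) ^ 2 * (1 - r ^ ((2 : ℝ) / K))) ^ 2) := by
  have hK0 : (0:ℝ) < K := lt_of_lt_of_le zero_lt_one hK
  have hp2 : (0:ℝ) < 1 - p ^ 2 := by nlinarith
  constructor
  · intro r hr0 hr1
    set s := r ^ (1 / K) with hsdef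
    have hs0 : 0 < s := Real.rpow_pos_of_pos hr0 _
    have hs1 : s < 1 := Real.rpow_lt_one hr0.le hr1 (by positivity)
    have hs2 : r ^ ((2:ℝ) / K) = s ^ 2 := by
      rw [hsdef, ← Real.rpow_two, ← Real.rpow_mul hr0.le]
      congr 1
      field_simp
    rw [hs2, image_eq p s hp0 hp1 hs0 hs1, vol_eq p s hp0 hp1 hs0 hs1]
  · have hC : 0 < Real.pi / (1 - p ^ 2) ^ 2 := div_pos Real.pi_pos (by positivity)
    set C := Real.pi / (1 - p ^ 2) ^ 2 with hCdef
    rw [isBigO_iff]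
    refine ⟨K ^ 2 / C, ?_⟩
    filter_upwards [Ioo_mem_nhdsLT_of_mem (⟨zero_lt_one, le_refl (1:ℝ)⟩ : (1:ℝ) ∈ Set.Ioc 0 1)]
      with r hr
    obtain ⟨hr0, hr1⟩ := hr
    set u := 1 - r ^ ((2:ℝ) / K) with hu
    have hru : r ^ ((2:ℝ) / K) = 1 - u := by rw [hu]; ring
    have hrpow_lt : r ^ ((2:ℝ) / K) < 1 := Real.rpow_lt_one hr0.le hr1 (by positivity)
    have hrpow_pos : 0 < r ^ ((2:ℝ) / K) := Real.rpow_pos_of_pos hr0 _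
    have hu0 : 0 < u := by rw [hu]; linarith
    have hu1 : u < 1 := by rw [hu]; linarith
    have hr2 : (1 - u) ^ (K:ℝ) = r ^ 2 := by
      rw [← hru, ← Real.rpow_mul hr0.le, show (2:ℝ) / K * K = 2 by field_simp,
        Real.rpow_two]
    have hderiv : ∀ x ∈ Set.Icc (0:ℝ) u,
        HasDerivWithinAt (fun t : ℝ => (1 - t) ^ (K:ℝ) + K * t)
          (K * (1 - x) ^ (K - 1) * (-1) + K * 1) (Set.Icc 0 u) x := by
      intro x _
      have h1 : HasDerivAt (fun t : ℝ => 1 - t) (-1) x := by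
        simpa using (hasDerivAt_id x).const_sub 1
      have h2 : HasDerivAt (fun y : ℝ => y ^ (K:ℝ)) (K * (1 - x) ^ (K - 1)) (1 - x) :=
        Real.hasDerivAt_rpow_const (Or.inr hK)
      have h3 : HasDerivAt (fun t : ℝ => (1 - t) ^ (K:ℝ)) (K * (1 - x) ^ (K - 1) * (-1)) x :=
        h2.comp x h1
      have h4 : HasDerivAt (fun t : ℝ => K * t) (K * 1) x := (hasDerivAt_id x).const_mul K
      exact (h3.add h4).hasDerivWithinAt
    have hbound : ∀ x ∈ Set.Ico (0:ℝ) u,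
        ‖K * (1 - x) ^ (K - 1) * (-1) + K * 1‖ ≤ K ^ 2 * u := by
      intro x hx
      have hx0 : 0 ≤ x := hx.1
      have hxu : x < u := hx.2
      have hb0 : 0 < 1 - x := by linarith
      have hle1 : (1 - x) ^ (K - 1) ≤ 1 :=
        Real.rpow_le_one hb0.le (by linarith) (by linarith)
      have hge : 1 - K * x ≤ (1 - x) ^ (K - 1) := by
        calc 1 - K * x = 1 + K * (-x) := by ring
          _ ≤ (1 + -x) ^ (K:ℝ) := one_add_mul_self_le_rpow_one_add (by linarith) hK
          _ = (1 - x) ^ (K:ℝ) := by ring_nf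
          _ ≤ (1 - x) ^ (K - 1) :=
            Real.rpow_le_rpow_of_exponent_ge hb0 (by linarith) (by linarith)
      rw [Real.norm_eq_abs, abs_le]
      constructor
      · nlinarith [mul_le_mul_of_nonneg_left hle1 hK0.le, mul_pos (mul_pos hK0 hK0) (mul_pos hu0 hu0)]
      · nlinarith [mul_le_mul_of_nonneg_left hge hK0.le]
    have hmvt := norm_image_sub_le_of_norm_deriv_le_segment' hderiv hbound u
      (Set.right_mem_Icc.mpr hu0.le)
    simp only [Real.norm_eq_abs, sub_zero, mul_zero, add_zero, Real.one_rpow] at hmvt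
    -- hmvt : |(1-u)^K + K*u - ((1-0)^K + K*0)| ≤ K^2*u*u
    have hmvt' : |(1 - u) ^ (K:ℝ) + K * u - 1| ≤ K ^ 2 * u * u := by
      simpa using hmvt
    rw [Real.norm_eq_abs, Real.norm_eq_abs]
    have heq : C * (1 - r ^ 2) - K * (C * u) = -(C * ((1 - u) ^ (K:ℝ) + K * u - 1)) := by
      rw [hr2]; ring
    rw [heq, abs_neg, abs_mul, _root_.abs_of_pos hC, _root_.abs_of_nonneg (sq_nonneg (C * u))]
    calc C * |(1 - u) ^ (K:ℝ) + K * u - 1| ≤ C * (K ^ 2 * u * u) :=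
          mul_le_mul_of_nonneg_left hmvt' hC.le
      _ = K ^ 2 / C * (C * u) ^ 2 := by field_simp
end

section
/- Let 0 ≤ p < 1, 0 < r < 1, and define f : ℂ → ℂ by f(z) = ((z̄ - p)/(1 - p z̄))/(1-p^2) for z ∈ E and f(z) = (r^2/(1-p^2))·((1-pz)/(z-p)) for z ∉ E, where E = { z : |z - p(1-r^2)/(1-p^2 r^2)| < r(1-p^2)/(1-p^2 r^2) }. Then f is continuous on ℂ \ {p}, ∂̄f(z) = χ_E(z)/(1 - p z̄)^2 and ∂f(z) = -r^2 (z-p)^{-2} χ_{ℂ\E}(z) (away from boundaries). -/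
open Complex Metric Classical

/-- The Wirtinger derivative `∂f` at `z`. -/
noncomputable def wirtingerDeriv (f : ℂ → ℂ) (z : ℂ) : ℂ :=
  (fderiv ℝ f z 1 - Complex.I * fderiv ℝ f z Complex.I) / 2

/-- The conjugate Wirtinger derivative `∂̄f` at `z`. -/
noncomputable def wirtingerDerivBar (f : ℂ → ℂ) (z : ℂ) : ℂ :=
  (fderiv ℝ f z 1 + Complex.I * fderiv ℝ f z Complex.I) / 2

private lemma aux_hH (p : ℝ) (hp2' : ((1 - p^2 : ℝ):ℂ) ≠ 0) (w : ℂ) (hw : (1:ℂ) - p*w ≠ 0) :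
    HasDerivAt (fun w : ℂ => (w - (p:ℂ)) / (1 - (p:ℂ)*w) / ((1 - p^2 : ℝ):ℂ))
      (((1:ℂ) - p*w)^(-2:ℤ)) w := by
  have h1 : HasDerivAt (fun w : ℂ => w - (p:ℂ)) 1 w := (hasDerivAt_id w).sub_const _
  have h2 : HasDerivAt (fun w : ℂ => 1 - (p:ℂ)*w) (-(p:ℂ)) w := by
    simpa using ((hasDerivAt_id w).const_mul (p:ℂ)).const_sub 1
  have h3 := (h1.div h2 hw).div_const ((1 - p^2 : ℝ):ℂ)
  refine h3.congr_deriv (Eq.symm ?_)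
  have hnum : 1 * (1 - (p:ℂ) * w) - (w - ↑p) * -↑p = ((1 - p^2 : ℝ):ℂ) := by push_cast; ring
  have hp2'' := hp2'
  push_cast at hp2''
  rw [hnum, zpow_neg, zpow_two]
  field_simp

private lemma aux_hB (p r : ℝ) (hp2' : ((1 - p^2 : ℝ):ℂ) ≠ 0) (w : ℂ) (hw : w ≠ (p:ℂ)) :
    HasDerivAt (fun z : ℂ => ((r^2/(1-p^2) : ℝ):ℂ) * ((1 - (p:ℂ)*z)/(z - (p:ℂ))))
      ((-(r^2:ℝ) : ℂ) * (w - (p:ℂ))^(-2:ℤ)) w := by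
  have hwp : w - (p:ℂ) ≠ 0 := sub_ne_zero_of_ne hw
  have h1 : HasDerivAt (fun z : ℂ => 1 - (p:ℂ)*z) (-(p:ℂ)) w := by
    simpa using ((hasDerivAt_id w).const_mul (p:ℂ)).const_sub 1
  have h2 : HasDerivAt (fun z : ℂ => z - (p:ℂ)) 1 w := (hasDerivAt_id w).sub_const _
  have h3 := (h1.div h2 hwp).const_mul ((r^2/(1-p^2) : ℝ):ℂ)
  refine h3.congr_deriv (Eq.symm ?_)
  have hnum : -(p:ℂ) * (w - ↑p) - (1 - ↑p * w) * 1 = -((1 - p^2 : ℝ):ℂ) := by push_cast; ring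
  have hp2'' := hp2'
  push_cast at hp2''
  rw [hnum, zpow_neg, zpow_two]
  push_cast
  field_simp

private lemma aux_branch_eq (p r : ℝ) (a : ℂ) (hp2' : ((1 - p^2 : ℝ):ℂ) ≠ 0)
    (hda : (1:ℂ) - p * (starRingEnd ℂ) a ≠ 0) (hap' : a - (p:ℂ) ≠ 0)
    (hcplx : ((starRingEnd ℂ) a - p) * (a - p)
      = ((r^2 : ℝ):ℂ) * ((1 - p*a) * (1 - p*(starRingEnd ℂ) a))) :
    ((starRingEnd ℂ) a - p) / (1 - p * (starRingEnd ℂ) a) / ((1 - p ^ 2 : ℝ):ℂ)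
      = ((r ^ 2 / (1 - p ^ 2) : ℝ) : ℂ) * ((1 - p * a) / (a - p)) := by
  have hc : ((r ^ 2 / (1 - p ^ 2) : ℝ) : ℂ) = ((r^2:ℝ):ℂ) / ((1 - p^2:ℝ):ℂ) := by push_cast; ring
  rw [hc, div_div, div_mul_div_comm, div_eq_div_iff (mul_ne_zero hda hp2') (mul_ne_zero hp2' hap')]
  linear_combination ((1 - p^2 : ℝ):ℂ) * hcplx

/-- The function `f` defined as `((z̄-p)/(1-p z̄))/(1-p²)` on the disk `E` and
`(r²/(1-p²))·((1-pz)/(z-p))` outside is continuous on `ℂ \ {p}`, with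
`∂̄f = χ_E (1-p z̄)^{-2}` and `∂f = -r²(z-p)^{-2} χ_{ℂ∖E}` away from `∂E`. -/
theorem extremal_hilbert_transform_function (p r : ℝ) (hp0 : 0 ≤ p) (hp1 : p < 1)
    (hr0 : 0 < r) (hr1 : r < 1)
    (E : Set ℂ)
    (hE : E = ball ((p * (1 - r ^ 2) / (1 - p ^ 2 * r ^ 2) : ℝ) : ℂ)
      (r * (1 - p ^ 2) / (1 - p ^ 2 * r ^ 2)))
    (f : ℂ → ℂ)
    (hf : f = fun z => if z ∈ E then
        ((starRingEnd ℂ) z - p) / (1 - p * (starRingEnd ℂ) z) / (1 - p ^ 2 : ℝ)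
      else ((r ^ 2 / (1 - p ^ 2) : ℝ) : ℂ) * ((1 - p * z) / (z - p))) :
    ContinuousOn f {z : ℂ | z ≠ (p : ℂ)} ∧
    (∀ z ∈ E,
      wirtingerDerivBar f z = (1 - p * (starRingEnd ℂ) z) ^ (-2 : ℤ) ∧
      wirtingerDeriv f z = 0) ∧
    (∀ z : ℂ, z ∉ closure E → z ≠ (p : ℂ) →
      wirtingerDerivBar f z = 0 ∧
      wirtingerDeriv f z = -(r ^ 2 : ℝ) * (z - p) ^ (-2 : ℤ)) := by
  have hpr : p * r < 1 := by nlinarith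
  have hpr2 : (0:ℝ) < 1 - p^2*r^2 := by
    nlinarith [mul_pos (show (0:ℝ) < 1 - p*r by linarith) (show (0:ℝ) < 1 + p*r by nlinarith)]
  have hp2 : (0:ℝ) < 1 - p^2 := by nlinarith
  have hp2' : ((1 - p^2 : ℝ) : ℂ) ≠ 0 := by exact_mod_cast hp2.ne'
  set c : ℝ := p * (1 - r ^ 2) / (1 - p ^ 2 * r ^ 2) with hcdef
  set ρ : ℝ := r * (1 - p ^ 2) / (1 - p ^ 2 * r ^ 2) with hρdef
  have hc0 : 0 ≤ c := div_nonneg (mul_nonneg hp0 (by nlinarith)) hpr2.le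
  have hρ0 : 0 < ρ := by positivity
  have key : ∀ z : ℂ, Complex.normSq (z - p) - r^2 * Complex.normSq (1 - p*z)
      = (1 - p^2*r^2) * (Complex.normSq (z - c) - ρ^2) := by
    intro z
    simp only [hcdef, hρdef, Complex.normSq_apply, Complex.sub_re, Complex.sub_im,
      Complex.ofReal_re, Complex.ofReal_im, Complex.one_re, Complex.one_im,
      Complex.mul_re, Complex.mul_im]
    field_simp
    ring
  have hcρ : c + ρ < 1 := by
    rw [hcdef, hρdef, ← add_div, div_lt_one hpr2]
    nlinarith [mul_pos (mul_pos (show (0:ℝ) < 1-r by linarith) (show (0:ℝ) < 1-p by linarith))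
      (show (0:ℝ) < 1-p*r by linarith)]
  have habs1 : ∀ z ∈ closedBall ((c:ℝ):ℂ) ρ, ‖z‖ < 1 := by
    intro z hz
    have h1 : ‖z - c‖ ≤ ρ := by
      simpa [Complex.dist_eq] using (mem_closedBall.mp hz)
    calc ‖z‖ ≤ ‖z - c‖ + ‖(c:ℂ)‖ := by
          simpa using norm_add_le (z - c) c
      _ ≤ ρ + c := by rw [Complex.norm_real, Real.norm_eq_abs, _root_.abs_of_nonneg hc0]; linarith
      _ < 1 := by linarith
  have hden : ∀ z : ℂ, ‖z‖ < 1 → (1 : ℂ) - p * z ≠ 0 := by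
    intro z hz h
    have h2 := congrArg norm (sub_eq_zero.mp h)
    simp only [norm_mul, norm_one, Complex.norm_real, Real.norm_eq_abs, _root_.abs_of_nonneg hp0] at h2
    nlinarith [norm_nonneg z]
  have hdenbar : ∀ z : ℂ, ‖z‖ < 1 → (1 : ℂ) - p * (starRingEnd ℂ) z ≠ 0 := by
    intro z hz
    exact hden _ (by simpa using hz)
  have hEopen : IsOpen E := hE ▸ isOpen_ball
  have hclosE : closure E = closedBall ((c:ℝ):ℂ) ρ := by
    rw [hE]; exact closure_ball _ hρ0.ne'
  have hfrontE : frontier E = sphere ((c:ℝ):ℂ) ρ := by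
    rw [hE]; exact frontier_ball _ hρ0.ne'
  subst hf
  refine ⟨?_, ?_, ?_⟩
  · -- continuity
    apply ContinuousOn.if
    · rintro a ⟨hap, hfr⟩
      rw [Set.setOf_mem_eq, hfrontE] at hfr
      have ha1 : ‖a‖ < 1 := habs1 a (sphere_subset_closedBall hfr)
      have hsz : Complex.normSq (a - c) = ρ^2 := by
        have : ‖a - c‖ = ρ := by simpa [Complex.dist_eq] using hfr
        rw [← Complex.sq_norm, this]
      have h1 : Complex.normSq (a - p) = r^2 * Complex.normSq (1 - p*a) := by
        have h2 := key a
        rw [hsz] at h2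
        simp at h2
        linarith
      have hcplx : ((starRingEnd ℂ) a - p) * (a - p)
          = ((r^2 : ℝ):ℂ) * ((1 - p*a) * (1 - p*(starRingEnd ℂ) a)) := by
        have e1 : ((Complex.normSq (a - p) : ℝ) : ℂ)
            = ((r^2 : ℝ):ℂ) * ((Complex.normSq (1 - p*a) : ℝ) : ℂ) := by
          rw [h1]; push_cast; ring
        rw [Complex.normSq_eq_conj_mul_self, Complex.normSq_eq_conj_mul_self] at e1
        simp only [map_sub, map_mul, map_one, Complex.conj_ofReal] at e1
        linear_combination e1
      exact aux_branch_eq p r a hp2' (hdenbar a ha1) (sub_ne_zero_of_ne hap) hcplx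
    · apply ContinuousOn.div_const
      apply ContinuousOn.div
      · exact (Complex.continuous_conj.sub continuous_const).continuousOn
      · exact (continuous_const.sub (continuous_const.mul Complex.continuous_conj)).continuousOn
      · rintro x ⟨hxp, hx⟩
        rw [Set.setOf_mem_eq, hclosE] at hx
        exact hdenbar x (habs1 x hx)
    · apply ContinuousOn.mul continuousOn_const
      apply ContinuousOn.div
      · exact (continuous_const.sub (continuous_const.mul continuous_id)).continuousOn
      · exact (continuous_id.sub continuous_const).continuousOn
      · rintro x ⟨hxp, hx⟩
        exact sub_ne_zero_of_ne hxp
  · -- inside E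
    intro z hz
    have habs : ‖z‖ < 1 :=
      habs1 z (ball_subset_closedBall (hE ▸ hz))
    have hdz : (1:ℂ) - p * (starRingEnd ℂ) z ≠ 0 := hdenbar z habs
    set d : ℂ := ((1:ℂ) - p * (starRingEnd ℂ) z)^(-2:ℤ) with hd
    have hconj : HasFDerivAt (fun w : ℂ => (starRingEnd ℂ) w)
        (Complex.conjCLE : ℂ →L[ℝ] ℂ) z := Complex.conjCLE.hasFDerivAt
    have hAz : HasFDerivAt
        (fun w : ℂ => ((starRingEnd ℂ) w - (p:ℂ)) / (1 - (p:ℂ)*(starRingEnd ℂ) w) / ((1 - p^2 : ℝ):ℂ))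
        ((((ContinuousLinearMap.smulRight (1 : ℂ →L[ℂ] ℂ) d).restrictScalars ℝ)).comp
          (Complex.conjCLE : ℂ →L[ℝ] ℂ)) z :=
      (((aux_hH p hp2' ((starRingEnd ℂ) z) hdz).hasFDerivAt).restrictScalars ℝ).comp z hconj
    have hfeq : (fun z : ℂ => if z ∈ E then
        ((starRingEnd ℂ) z - p) / (1 - p * (starRingEnd ℂ) z) / ((1 - p ^ 2 : ℝ):ℂ)
      else ((r ^ 2 / (1 - p ^ 2) : ℝ) : ℂ) * ((1 - p * z) / (z - p)))
        =ᶠ[nhds z] (fun w : ℂ => ((starRingEnd ℂ) w - (p:ℂ)) / (1 - (p:ℂ)*(starRingEnd ℂ) w) / ((1 - p^2 : ℝ):ℂ)) := by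
      filter_upwards [hEopen.mem_nhds hz] with w hw
      simp only [if_pos hw]
    have hL := (hAz.congr_of_eventuallyEq hfeq).fderiv
    constructor
    · rw [wirtingerDerivBar, hL]
      simp only [ContinuousLinearMap.coe_comp', Function.comp_apply,
        ContinuousLinearMap.coe_restrictScalars', ContinuousLinearMap.smulRight_apply,
        ContinuousLinearMap.one_apply, ContinuousLinearEquiv.coe_coe, Complex.conjCLE_apply,
        map_one, Complex.conj_I, smul_eq_mul]
      rw [hd]
      linear_combination (-(d/2)) * Complex.I_mul_I
    · rw [wirtingerDeriv, hL]
      simp only [ContinuousLinearMap.coe_comp', Function.comp_apply,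
        ContinuousLinearMap.coe_restrictScalars', ContinuousLinearMap.smulRight_apply,
        ContinuousLinearMap.one_apply, ContinuousLinearEquiv.coe_coe, Complex.conjCLE_apply,
        map_one, Complex.conj_I, smul_eq_mul]
      linear_combination (d/2) * Complex.I_mul_I
  · -- outside closure E
    intro z hz hzp
    set b : ℂ := (-(r^2:ℝ) : ℂ) * (z - (p:ℂ))^(-2:ℤ) with hb
    have hBz : HasFDerivAt
        (fun w : ℂ => ((r^2/(1-p^2) : ℝ):ℂ) * ((1 - (p:ℂ)*w)/(w - (p:ℂ))))
        ((ContinuousLinearMap.smulRight (1 : ℂ →L[ℂ] ℂ) b).restrictScalars ℝ) z :=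
      ((aux_hB p r hp2' z hzp).hasFDerivAt).restrictScalars ℝ
    have hfeq : (fun z : ℂ => if z ∈ E then
        ((starRingEnd ℂ) z - p) / (1 - p * (starRingEnd ℂ) z) / ((1 - p ^ 2 : ℝ):ℂ)
      else ((r ^ 2 / (1 - p ^ 2) : ℝ) : ℂ) * ((1 - p * z) / (z - p)))
        =ᶠ[nhds z] (fun w : ℂ => ((r^2/(1-p^2) : ℝ):ℂ) * ((1 - (p:ℂ)*w)/(w - (p:ℂ)))) := by
      filter_upwards [isClosed_closure.isOpen_compl.mem_nhds hz] with w hw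
      simp only [if_neg (fun h => hw (subset_closure h))]
    have hL := (hBz.congr_of_eventuallyEq hfeq).fderiv
    constructor
    · rw [wirtingerDerivBar, hL]
      simp only [ContinuousLinearMap.coe_restrictScalars', ContinuousLinearMap.smulRight_apply,
        ContinuousLinearMap.one_apply, smul_eq_mul]
      linear_combination (b/2) * Complex.I_mul_I
    · rw [wirtingerDeriv, hL]
      simp only [ContinuousLinearMap.coe_restrictScalars', ContinuousLinearMap.smulRight_apply,
        ContinuousLinearMap.one_apply, smul_eq_mul]
      rw [hb]
      linear_combination (-(b/2)) * Complex.I_mul_I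
end
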